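/- arXiv:1102.4132 — 3 statements merged into one kernel-verified Lean document; each statement's English description precedes it below -/
import Mathlib

section
/- Let b₀ ∈ (−p/α,∞) and let u̅, u̲ : [−p/α,∞) → [0,∞) be continuous on [−p/α,∞), locally Lipschitz on (−p/α,∞), each satisfying a linear growth bound (there exist constants c₁, c₂ with u(x) ≤ c₁·x + c₂ for all x ≥ −p/α), such that u̅ is a viscosity super-solution and u̲ is a viscosity sub-solution of the HJB equation on (b₀,∞). If u̲(x) ≤ u̅(x) for all x ∈ [−p/α, b₀], then u̲(x) ≤ u̅(x) for all x ≥ −p/α. -/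
open MeasureTheory Set Filter

noncomputable section

/-- Drift coefficient: c(x) = p + r x for x ≥ 0, c(x) = p + α x for x < 0. -/
def drift (p r a x : ℝ) : ℝ := if 0 ≤ x then p + r * x else p + a * x

/-- I_v(x) = ∫_{(0, x+p/α]} v(x−u) dμ(u). -/
def Iop (p a : ℝ) (mu : Measure ℝ) (v : ℝ → ℝ) (x : ℝ) : ℝ :=
  ∫ u in Set.Ioc (0 : ℝ) (x + p / a), v (x - u) ∂mu

/-- L_{v,φ}(x) = c(x)·φ′(x) − (λ+δ)·v(x) + λ·I_v(x). -/
def Lphi (p lam d r a : ℝ) (mu : Measure ℝ) (v phi : ℝ → ℝ) (x : ℝ) : ℝ :=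
  drift p r a x * deriv phi x - (lam + d) * v x + lam * Iop p a mu v x

/-- G_v(x) = c(x) − (λ+δ)·v(x) + λ·I_v(x). -/
def Gop (p lam d r a : ℝ) (mu : Measure ℝ) (v : ℝ → ℝ) (x : ℝ) : ℝ :=
  drift p r a x - (lam + d) * v x + lam * Iop p a mu v x

/-- Viscosity sub-solution of the HJB equation on J ⊆ (−p/α,∞). -/
def IsViscSubsol (p lam d r a : ℝ) (mu : Measure ℝ) (u : ℝ → ℝ) (J : Set ℝ) : Prop :=
  ∀ x ∈ J, ∀ phi : ℝ → ℝ, ContDiff ℝ 1 phi → phi x = u x →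
    (∀ y ∈ Set.Ici (-(p / a)), u y - phi y ≤ u x - phi x) →
    0 ≤ max (1 - deriv phi x) (Lphi p lam d r a mu u phi x)

/-- Viscosity super-solution of the HJB equation on J ⊆ (−p/α,∞). -/
def IsViscSupersol (p lam d r a : ℝ) (mu : Measure ℝ) (u : ℝ → ℝ) (J : Set ℝ) : Prop :=
  ∀ x ∈ J, ∀ phi : ℝ → ℝ, ContDiff ℝ 1 phi → phi x = u x →
    (∀ y ∈ Set.Ici (-(p / a)), u x - phi x ≤ u y - phi y) →
    max (1 - deriv phi x) (Lphi p lam d r a mu u phi x) ≤ 0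

/-- Viscosity solution: both sub- and super-solution. -/
def IsViscSol (p lam d r a : ℝ) (mu : Measure ℝ) (u : ℝ → ℝ) (J : Set ℝ) : Prop :=
  IsViscSubsol p lam d r a mu u J ∧ IsViscSupersol p lam d r a mu u J

/-- Locally Lipschitz on a set. -/
def LocLipOn (s : Set ℝ) (u : ℝ → ℝ) : Prop :=
  ∀ x ∈ s, ∃ K : NNReal, ∃ eps : ℝ, 0 < eps ∧ LipschitzOnWith K u (s ∩ Metric.ball x eps)

/-- Linear growth bound on [−p/α,∞). -/
def LinGrowth (p a : ℝ) (u : ℝ → ℝ) : Prop :=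
  ∃ c₁ c₂ : ℝ, ∀ x : ℝ, -(p / a) ≤ x → u x ≤ c₁ * x + c₂

/-- Standard value-function candidate. -/
structure IsCandidate (p lam d r a : ℝ) (mu : Measure ℝ) (V : ℝ → ℝ) : Prop where
  cont : ContinuousOn V (Set.Ici (-(p / a)))
  nonneg : ∀ x ∈ Set.Ici (-(p / a)), 0 ≤ V x
  mono : MonotoneOn V (Set.Ici (-(p / a)))
  boundary : V (-(p / a)) = 0
  slope : ∀ x y : ℝ, -(p / a) ≤ x → x ≤ y → y - x ≤ V y - V x
  growth : ∀ x : ℝ, 0 ≤ x → V x ≤ (d * x + p) / (d - r) + p / a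
  locLip : LocLipOn (Set.Ioi (-(p / a))) V
  visc : IsViscSol p lam d r a mu V (Set.Ioi (-(p / a)))
  derivLim : ∀ x ∈ Set.Ioi (-(p / a)), ∀ (h : ℕ → ℝ) (dd : ℝ),
      ((∀ n, 0 < h n) ∨ (∀ n, h n < 0)) →
      Filter.Tendsto h Filter.atTop (nhds 0) →
      Filter.Tendsto (fun n => (V (x + h n) - V x) / h n) Filter.atTop (nhds dd) →
      1 ≤ dd ∧ dd * drift p r a x - (lam + d) * V x + lam * Iop p a mu V x ≤ 0

/-- The set A = {x ∈ [−p/α,∞) : G_V(x) = 0}. -/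
def setA (p lam d r a : ℝ) (mu : Measure ℝ) (V : ℝ → ℝ) : Set ℝ :=
  {x | x ∈ Set.Ici (-(p / a)) ∧ Gop p lam d r a mu V x = 0}

/-- The set B = {x ∈ [−p/α,∞) : V′(x) exists, V′(x) = 1 and G_V(x) < 0}. -/
def setB (p lam d r a : ℝ) (mu : Measure ℝ) (V : ℝ → ℝ) : Set ℝ :=
  {x | x ∈ Set.Ici (-(p / a)) ∧ DifferentiableAt ℝ V x ∧ deriv V x = 1 ∧
      Gop p lam d r a mu V x < 0}

/-- The set C = [−p/α,∞) \ (A ∪ B). -/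
def setC (p lam d r a : ℝ) (mu : Measure ℝ) (V : ℝ → ℝ) : Set ℝ :=
  Set.Ici (-(p / a)) \ (setA p lam d r a mu V ∪ setB p lam d r a mu V)

/-!
Doubling of variables. For `γ, ε > 0` maximise
`usub x - ε g x - ubar y - N (x - y + γ)^2` over `[-p/α, ∞)²`, where `g x = (x + k)^β` with
`1 < β < δ/r`: `g` is superlinear, so the maximum exists although `usub` grows linearly, and
`c g' ≤ δ g`. For `N` large the maximum point `(X, Y)` satisfies `X ≤ Y ≤ X + 2γ`; the shift `γ`
is what puts `X` to the left of `Y`. If `X ≤ b₀`, the initial ordering and the uniform continuity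
of `ubar` bound the maximum by a small `η`. Otherwise both viscosity inequalities apply with
quadratic test functions, and subtracting them gives `δ (usub X - ubar Y) ≤ δ ε g X`: the drift
term has the right sign because `c` is increasing and `X ≤ Y`, and the jump terms compare because
moving both points by the same claim size leaves the penalty unchanged. Letting `ε`, `γ` and then
`η` tend to `0` gives `usub ≤ ubar`.
-/

open Topology

lemma drift_mono {p r a : ℝ} (hr : 0 ≤ r) (ha : 0 ≤ a) : Monotone (drift p r a) := by
  intro x y hxy
  unfold drift
  split_ifs with hx hy hy <;> nlinarith

lemma drift_le {p r a : ℝ} (hra : r ≤ a) (x : ℝ) : drift p r a x ≤ p + r * x := by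
  unfold drift
  split_ifs with hx
  · exact le_rfl
  · nlinarith

lemma ContinuousOn.bddAbove_image_Ici {f : ℝ → ℝ} {x₀ : ℝ} (hf : ContinuousOn f (Ici x₀))
    (htop : Tendsto f atTop atBot) : BddAbove (f '' Ici x₀) := by
  obtain ⟨R, hR⟩ := eventually_atTop.mp (htop.eventually_le_atBot (f x₀))
  obtain ⟨M, hM⟩ := isCompact_Icc.bddAbove_image (hf.mono (Icc_subset_Ici_self : Icc x₀ R ⊆ _))
  refine ⟨max M (f x₀), forall_mem_image.mpr fun x hx => ?_⟩
  rcases le_total x R with hxR | hRx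
  · exact le_max_of_le_left (hM (mem_image_of_mem f ⟨hx, hxR⟩))
  · exact le_max_of_le_right (hR x hRx)

lemma ContinuousOn.exists_pos_forall_sub_le {v : ℝ → ℝ} {x₀ : ℝ} (hv : ContinuousOn v (Ici x₀))
    (b : ℝ) {η : ℝ} (hη : 0 < η) : ∃ δ > 0, ∀ z ∈ Icc x₀ b, ∀ w ∈ Icc z (z + δ), v z - v w ≤ η := by
  have hK : Icc x₀ (b + 1) ⊆ Ici x₀ := Icc_subset_Ici_self
  obtain ⟨δ, hδ, huc⟩ := Metric.uniformContinuousOn_iff.mp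
    (isCompact_Icc.uniformContinuousOn_of_continuous (hv.mono hK)) η hη
  refine ⟨min (δ / 2) 1, by positivity, fun z hz w hw => ?_⟩
  have hmin := min_le_left (δ / 2) 1
  have hmin' := min_le_right (δ / 2) 1
  have := huc z ⟨hz.1, by linarith [hz.2]⟩ w ⟨by linarith [hz.1, hw.1], by linarith [hz.2, hw.2]⟩
    (by rw [Real.dist_eq, abs_sub_lt_iff]; constructor <;> linarith [hw.1, hw.2])
  rw [Real.dist_eq] at this
  exact (le_abs_self _).trans this.le

lemma le_of_forall_pos_le_add_mul {a b c : ℝ} (h : ∀ ε > 0, a ≤ b + ε * c) : a ≤ b := by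
  have hlim : Tendsto (fun ε => b + ε * c) (𝓝[>] 0) (𝓝 b) :=
    ((by fun_prop : Continuous fun ε : ℝ => b + ε * c).tendsto' 0 b (by simp)).mono_left
      nhdsWithin_le_nhds
  exact ge_of_tendsto hlim (eventually_nhdsWithin_of_forall h)

lemma ContinuousOn.le_of_forall_le_add {v : ℝ → ℝ} {x₀ x c γ₀ : ℝ} (hv : ContinuousOn v (Ici x₀))
    (hx : x₀ ≤ x) (hγ₀ : 0 < γ₀) (h : ∀ γ ∈ Ioo 0 γ₀, c ≤ v (x + γ)) : c ≤ v x := by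
  have hshift : Tendsto (fun γ => x + γ) (𝓝[>] 0) (𝓝[Ici x₀] x) := by
    refine tendsto_nhdsWithin_iff.mpr ⟨?_, eventually_nhdsWithin_of_forall fun γ hγ => ?_⟩
    · exact ((continuous_const_add x).tendsto' 0 x (add_zero x)).mono_left nhdsWithin_le_nhds
    · exact mem_Ici.mpr (by linarith [mem_Ioi.mp hγ])
  exact ge_of_tendsto ((hv x hx).tendsto.comp hshift)
    (Filter.mem_of_superset (Ioo_mem_nhdsGT hγ₀) h)

lemma LinGrowth.tendsto_sub_mul_atBot {p a ε : ℝ} {u g : ℝ → ℝ} (hu : LinGrowth p a u)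
    (hg : Tendsto (fun x => g x / x) atTop atTop) (hε : 0 < ε) :
    Tendsto (fun x => u x - ε * g x) atTop atBot := by
  obtain ⟨c₁, c₂, hu⟩ := hu
  have hslope : Tendsto (fun x => c₁ - ε * (g x / x)) atTop atBot := by
    simpa [sub_eq_add_neg] using
      tendsto_atBot_add_const_left _ c₁ (tendsto_neg_atTop_atBot.comp (hg.const_mul_atTop hε))
  have hlin : Tendsto (fun x => x * (c₁ - ε * (g x / x)) + c₂) atTop atBot :=
    tendsto_atBot_add_const_right _ _ (tendsto_id.atTop_mul_atBot₀ hslope)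
  refine tendsto_atBot_mono' _ ?_ hlin
  filter_upwards [eventually_gt_atTop 0, eventually_ge_atTop (-(p / a))] with x hx hxp
  have : x * (c₁ - ε * (g x / x)) = c₁ * x - ε * g x := by field_simp
  linarith [hu x hxp]

structure IsPenaltyWeight (c : ℝ → ℝ) (d x₀ : ℝ) (g : ℝ → ℝ) : Prop where
  contDiff : ContDiff ℝ 1 g
  monotoneOn : MonotoneOn g (Ici x₀)
  nonneg : ∀ x ∈ Ici x₀, 0 ≤ g x
  deriv_pos : ∀ x ∈ Ici x₀, 0 < deriv g x
  mul_deriv_le : ∀ x ∈ Ici x₀, c x * deriv g x ≤ d * g x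
  superlinear : Tendsto (fun x => g x / x) atTop atTop

-- The weight is `(x + k)^β` with `1 < β < d / r`.
lemma exists_isPenaltyWeight {c : ℝ → ℝ} {q r d : ℝ} (x₀ : ℝ) (hc : ∀ x, c x ≤ q + r * x)
    (hr : 0 < r) (hrd : r < d) : ∃ g, IsPenaltyWeight c d x₀ g := by
  have hd : 0 < d := hr.trans hrd
  set β := (1 + d / r) / 2
  have hβr : β * r < d := by
    have : d / r * r = d := div_mul_cancel₀ d hr.ne'
    simp only [β]; nlinarith
  have hβ : 1 < β := by
    have : 1 < d / r := (one_lt_div hr).mpr hrd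
    simp only [β]; linarith
  set k := |x₀| + 1 + β * |q + r * x₀| / d
  have hk₀ : 0 ≤ β * |q + r * x₀| / d := by positivity
  have hk : ∀ x ∈ Ici x₀, 1 ≤ x + k := fun x hx => by
    linarith [neg_abs_le x₀, mem_Ici.mp hx]
  have hderiv : ∀ x ∈ Ici x₀, HasDerivAt (fun y => (y + k) ^ β) (β * (x + k) ^ (β - 1)) x :=
    fun x hx => by
      simpa using ((hasDerivAt_id x).add_const k).rpow_const (p := β) (Or.inr hβ.le)
  refine ⟨fun x => (x + k) ^ β, ?_, ?_, fun x hx => ?_, fun x hx => ?_, fun x hx => ?_, ?_⟩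
  · exact (Real.contDiff_rpow_const_of_le (n := 1) (by simpa using hβ.le)).comp
      (contDiff_id.add contDiff_const)
  · intro x hx y _ hxy
    exact Real.rpow_le_rpow (by linarith [hk x hx]) (by linarith) (by linarith)
  · exact Real.rpow_nonneg (by linarith [hk x hx]) _
  · rw [(hderiv x hx).deriv]
    exact mul_pos (by linarith) (Real.rpow_pos_of_pos (by linarith [hk x hx]) _)
  · have hxk : 0 < x + k := by linarith [hk x hx]
    -- `d (x + k) - β (q + r x)`
    -- `  = (d - β r) (x - x₀) + d (x₀ + |x₀| + 1) + β (|q + r x₀| - (q + r x₀))`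
    have hlin : β * (q + r * x) ≤ d * (x + k) := by
      have h1 : d * (β * |q + r * x₀| / d) = β * |q + r * x₀| := by field_simp
      have h2 : 0 ≤ (d - β * r) * (x - x₀) := mul_nonneg (by linarith) (by linarith [mem_Ici.mp hx])
      have h3 : β * (q + r * x₀) ≤ β * |q + r * x₀| :=
        mul_le_mul_of_nonneg_left (le_abs_self _) (by linarith)
      nlinarith [neg_abs_le x₀]
    rw [(hderiv x hx).deriv, show (x + k) ^ β = (x + k) * (x + k) ^ (β - 1) by
      rw [← Real.rpow_one_add' hxk.le (by linarith)]; ring_nf]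
    have hpow := (Real.rpow_pos_of_pos hxk (β - 1)).le
    calc c x * (β * (x + k) ^ (β - 1)) ≤ (q + r * x) * (β * (x + k) ^ (β - 1)) :=
          mul_le_mul_of_nonneg_right (hc x) (by positivity)
      _ = β * (q + r * x) * (x + k) ^ (β - 1) := by ring
      _ ≤ d * (x + k) * (x + k) ^ (β - 1) := mul_le_mul_of_nonneg_right hlin hpow
      _ = d * ((x + k) * (x + k) ^ (β - 1)) := by ring
  · refine tendsto_atTop_mono' _ ?_ (tendsto_rpow_atTop (by linarith : 0 < β - 1))
    filter_upwards [eventually_gt_atTop 0] with x hx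
    rw [le_div_iff₀ hx, ← Real.rpow_add_one hx.ne', sub_add_cancel]
    exact Real.rpow_le_rpow hx.le (by linarith [abs_nonneg x₀]) (by linarith)

section Viscosity

variable {p lam d r a : ℝ} {mu : Measure ℝ} {u φ : ℝ → ℝ} {J : Set ℝ} {x : ℝ}

lemma Lphi_add_const (c : ℝ) :
    Lphi p lam d r a mu u (fun y => φ y + c) x = Lphi p lam d r a mu u φ x := by
  simp only [Lphi, deriv_add_const]

-- The definitions ask for `φ x = u x`; a constant shift of `φ` removes that requirement.
lemma IsViscSupersol.one_le_deriv_and_Lphi_nonpos (h : IsViscSupersol p lam d r a mu u J)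
    (hx : x ∈ J) (hφ : ContDiff ℝ 1 φ) (hmin : IsMinOn (fun y => u y - φ y) (Ici (-(p / a))) x) :
    1 ≤ deriv φ x ∧ Lphi p lam d r a mu u φ x ≤ 0 := by
  have := h x hx (fun y => φ y + (u x - φ x)) (hφ.add contDiff_const) (by ring)
    (fun y hy => by linarith [isMinOn_iff.mp hmin y hy])
  rw [max_le_iff, deriv_add_const, Lphi_add_const] at this
  exact ⟨by linarith [this.1], this.2⟩

lemma IsViscSubsol.Lphi_nonneg (h : IsViscSubsol p lam d r a mu u J) (hx : x ∈ J)
    (hφ : ContDiff ℝ 1 φ) (hmax : IsMaxOn (fun y => u y - φ y) (Ici (-(p / a))) x)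
    (hslope : 1 < deriv φ x) : 0 ≤ Lphi p lam d r a mu u φ x := by
  have := h x hx (fun y => φ y + (u x - φ x)) (hφ.add contDiff_const) (by ring)
    (fun y hy => by linarith [isMaxOn_iff.mp hmax y hy])
  rw [deriv_add_const, Lphi_add_const] at this
  exact (le_max_iff.mp this).resolve_left (by linarith)

end Viscosity

section Integral

variable {p a : ℝ} {mu : Measure ℝ}

lemma integrableOn_Iop [IsFiniteMeasure mu] {v : ℝ → ℝ} (hv : ContinuousOn v (Ici (-(p / a))))
    (x : ℝ) : IntegrableOn (fun u => v (x - u)) (Ioc 0 (x + p / a)) mu := by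
  have hmaps : MapsTo (fun u => x - u) (Icc 0 (x + p / a)) (Ici (-(p / a))) :=
    fun u hu => by simp only [mem_Ici]; linarith [hu.2]
  exact ((hv.comp (by fun_prop) hmaps).integrableOn_compact isCompact_Icc).mono_set
    Ioc_subset_Icc_self

lemma Iop_le_add_Iop [IsZeroOrProbabilityMeasure mu] {v w : ℝ → ℝ} {X Y c : ℝ}
    (hv : ContinuousOn v (Ici (-(p / a)))) (hw : ContinuousOn w (Ici (-(p / a))))
    (hw₀ : ∀ y ∈ Ici (-(p / a)), 0 ≤ w y) (hXY : X ≤ Y) (hc : 0 ≤ c)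
    (h : ∀ u ∈ Ioc 0 (X + p / a), v (X - u) ≤ c + w (Y - u)) :
    Iop p a mu v X ≤ c + Iop p a mu w Y := by
  have hsub : Ioc 0 (X + p / a) ⊆ Ioc 0 (Y + p / a) := Ioc_subset_Ioc le_rfl (by linarith)
  have hwX := (integrableOn_Iop (mu := mu) hw Y).mono_set hsub
  calc Iop p a mu v X ≤ ∫ u in Ioc 0 (X + p / a), (c + w (Y - u)) ∂mu :=
        setIntegral_mono_on (integrableOn_Iop hv X) ((integrable_const c).add hwX)
          measurableSet_Ioc h
    _ = mu.real (Ioc 0 (X + p / a)) * c + ∫ u in Ioc 0 (X + p / a), w (Y - u) ∂mu := by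
        rw [integral_add (integrable_const c) hwX, setIntegral_const, smul_eq_mul]
    _ ≤ c + Iop p a mu w Y := by
        gcongr
        · exact mul_le_of_le_one_left hc measureReal_le_one
        · refine setIntegral_mono_set (integrableOn_Iop hw Y) ?_ hsub.eventuallyLE
          filter_upwards [ae_restrict_mem measurableSet_Ioc] with u hu
          exact hw₀ _ (by simp only [mem_Ici]; linarith [hu.2])

end Integral

def doubling (f h : ℝ → ℝ) (N γ : ℝ) (z : ℝ × ℝ) : ℝ :=
  f z.1 - h z.2 - N * (z.1 - z.2 + γ) ^ 2

lemma exists_isMaxOn_doubling {f h : ℝ → ℝ} {x₀ N γ : ℝ} (hf : ContinuousOn f (Ici x₀))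
    (hh : ContinuousOn h (Ici x₀)) (hh₀ : ∀ y ∈ Ici x₀, 0 ≤ h y) (hN : 0 < N)
    (htop : Tendsto f atTop atBot) :
    ∃ z ∈ Ici x₀ ×ˢ Ici x₀, IsMaxOn (doubling f h N γ) (Ici x₀ ×ˢ Ici x₀) z := by
  set c := doubling f h N γ (x₀, x₀)
  obtain ⟨M, hM⟩ := hf.bddAbove_image_Ici htop
  obtain ⟨R, hR⟩ := eventually_atTop.mp (htop.eventually_le_atBot c)
  set T := |M - c| / N + 1
  have hcont : ContinuousOn (doubling f h N γ) (Ici x₀ ×ˢ Ici x₀) :=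
    ((hf.comp continuousOn_fst fun z hz => hz.1).sub
      (hh.comp continuousOn_snd fun z hz => hz.2)).sub (by fun_prop)
  refine hcont.exists_isMaxOn' (isClosed_Ici.prod isClosed_Ici) (x₀ := (x₀, x₀))
    ⟨mem_Ici.mpr le_rfl, mem_Ici.mpr le_rfl⟩ ?_
  rw [eventually_inf_principal]
  filter_upwards [(isCompact_Icc.prod isCompact_Icc).compl_mem_cocompact
    (s := Icc x₀ R ×ˢ Icc x₀ (R + γ + T))] with ⟨x, y⟩ hK ⟨hx, hy⟩
  have hfx : f x ≤ M := hM (mem_image_of_mem f hx)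
  have hhy : 0 ≤ h y := hh₀ y hy
  change doubling f h N γ (x, y) ≤ c
  simp only [doubling, mem_compl_iff, mem_prod, mem_Icc, not_and_or, not_le] at hK ⊢
  rcases le_or_gt x R with hxR | hRx
  · have hyT : R + γ + T < y := by
      rcases hK with (hK | hK) | (hK | hK) <;> linarith [mem_Ici.mp hx, mem_Ici.mp hy]
    have hNT : N * T = |M - c| + N := by simp only [T]; field_simp
    have hT : 1 ≤ T := by simp only [T]; linarith [(by positivity : 0 ≤ |M - c| / N)]
    have hpen : T ≤ (x - y + γ) ^ 2 := by nlinarith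
    nlinarith [le_abs_self (M - c)]
  · have := hR x hRx.le
    nlinarith

section Comparison

variable {p lam d r a : ℝ} {mu : Measure ℝ} {usub ubar g : ℝ → ℝ} {J : Set ℝ}

lemma IsViscSupersol.doubling_test {f : ℝ → ℝ} {N γ X Y : ℝ}
    (hsuper : IsViscSupersol p lam d r a mu ubar J) (hY : Y ∈ J) (hX₀ : -(p / a) ≤ X)
    (hmax : IsMaxOn (doubling f ubar N γ) (Ici (-(p / a)) ×ˢ Ici (-(p / a))) (X, Y)) :
    1 ≤ 2 * N * (X - Y + γ) ∧
      drift p r a Y * (2 * N * (X - Y + γ)) - (lam + d) * ubar Y + lam * Iop p a mu ubar Y ≤ 0 := by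
  have hψ : HasDerivAt (fun y => -(N * (X - y + γ) ^ 2)) (2 * N * (X - Y + γ)) Y := by
    have h : HasDerivAt (fun y => X - y + γ) (-1) Y := by
      simpa using ((hasDerivAt_id Y).const_sub X).add_const γ
    refine ((h.pow 2).const_mul N).neg.congr_deriv ?_
    push_cast; ring
  have hmin : IsMinOn (fun y => ubar y - -(N * (X - y + γ) ^ 2)) (Ici (-(p / a))) Y :=
    isMinOn_iff.mpr fun y hy => by
      have := isMaxOn_iff.mp hmax (X, y) ⟨hX₀, hy⟩
      simp only [doubling] at this
      linarith
  have := hsuper.one_le_deriv_and_Lphi_nonpos hY (by fun_prop) hmin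
  rwa [Lphi, hψ.deriv] at this

lemma IsViscSubsol.doubling_test {h : ℝ → ℝ} {N γ ε X Y : ℝ}
    (hsub : IsViscSubsol p lam d r a mu usub J) (hX : X ∈ J) (hY₀ : -(p / a) ≤ Y)
    (hg : ContDiff ℝ 1 g) (hslope : 1 < 2 * N * (X - Y + γ) + ε * deriv g X)
    (hmax : IsMaxOn (doubling (fun x => usub x - ε * g x) h N γ)
      (Ici (-(p / a)) ×ˢ Ici (-(p / a))) (X, Y)) :
    0 ≤ drift p r a X * (2 * N * (X - Y + γ) + ε * deriv g X) - (lam + d) * usub X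
      + lam * Iop p a mu usub X := by
  have hφ : HasDerivAt (fun x => N * (x - Y + γ) ^ 2 + ε * g x)
      (2 * N * (X - Y + γ) + ε * deriv g X) X := by
    have h : HasDerivAt (fun x => x - Y + γ) 1 X := by
      simpa using ((hasDerivAt_id X).sub_const Y).add_const γ
    refine (((h.pow 2).const_mul N).add
      ((hg.differentiable one_ne_zero X).hasDerivAt.const_mul ε)).congr_deriv ?_
    push_cast; ring
  have hmax' : IsMaxOn (fun x => usub x - (N * (x - Y + γ) ^ 2 + ε * g x)) (Ici (-(p / a))) X :=
    isMaxOn_iff.mpr fun x hx => by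
      have := isMaxOn_iff.mp hmax (x, Y) ⟨hx, hY₀⟩
      simp only [doubling] at this
      linarith
  have := hsub.Lphi_nonneg hX (by fun_prop) hmax' (by rwa [hφ.deriv])
  rwa [Lphi, hφ.deriv] at this

lemma sub_sub_super_le_of_isMaxOn_doubling [IsZeroOrProbabilityMeasure mu] (hlam : 0 ≤ lam)
    (hd : 0 < d) (hr : 0 ≤ r) (ha : 0 ≤ a)
    (hub_cont : ContinuousOn ubar (Ici (-(p / a)))) (hus_cont : ContinuousOn usub (Ici (-(p / a))))
    (hub_nonneg : ∀ x ∈ Ici (-(p / a)), 0 ≤ ubar x)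
    (hsuper : IsViscSupersol p lam d r a mu ubar J) (hsub : IsViscSubsol p lam d r a mu usub J)
    (hg : IsPenaltyWeight (drift p r a) d (-(p / a)) g) {N γ ε X Y : ℝ}
    (hε : 0 < ε) (hX : X ∈ J) (hY : Y ∈ J) (hX₀ : -(p / a) ≤ X) (hXY : X ≤ Y)
    (hmax : IsMaxOn (doubling (fun x => usub x - ε * g x) ubar N γ)
      (Ici (-(p / a)) ×ˢ Ici (-(p / a))) (X, Y)) :
    usub X - ubar Y ≤ ε * g X := by
  obtain ⟨hslope, hLsup⟩ := hsuper.doubling_test hY hX₀ hmax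
  have hLsub := hsub.doubling_test hX (hX₀.trans hXY) hg.contDiff
    (by nlinarith [hg.deriv_pos X hX₀]) hmax
  rcases le_or_gt (usub X - ubar Y) 0 with hgap | hgap
  · exact hgap.trans (mul_nonneg hε.le (hg.nonneg X hX₀))
  -- shifting both points by the same claim size leaves the penalty unchanged
  have hI : Iop p a mu usub X ≤ (usub X - ubar Y) + Iop p a mu ubar Y := by
    refine Iop_le_add_Iop hus_cont hub_cont hub_nonneg hXY hgap.le fun u hu => ?_
    have hXu : X - u ∈ Ici (-(p / a)) := mem_Ici.mpr (by linarith [hu.2])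
    have hmaxu := isMaxOn_iff.mp hmax (X - u, Y - u) ⟨hXu, mem_Ici.mpr (by linarith [hu.2])⟩
    have hgu := hg.monotoneOn hXu hX₀ (by linarith [hu.1])
    simp only [doubling] at hmaxu
    nlinarith
  have hdrift : drift p r a X * (2 * N * (X - Y + γ)) ≤ drift p r a Y * (2 * N * (X - Y + γ)) :=
    mul_le_mul_of_nonneg_right (drift_mono hr ha hXY) (by linarith)
  have : d * (usub X - ubar Y) ≤ d * (ε * g X) := by
    nlinarith [mul_le_mul_of_nonneg_left (hg.mul_deriv_le X hX₀) hε.le,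
      mul_le_mul_of_nonneg_left hI hlam]
  exact le_of_mul_le_mul_left this hd

lemma sub_le_super_shift_add [IsZeroOrProbabilityMeasure mu] (hlam : 0 ≤ lam) (hd : 0 < d)
    (hr : 0 ≤ r) (ha : 0 ≤ a) {b₀ : ℝ}
    (hub_cont : ContinuousOn ubar (Ici (-(p / a)))) (hus_cont : ContinuousOn usub (Ici (-(p / a))))
    (hub_nonneg : ∀ x ∈ Ici (-(p / a)), 0 ≤ ubar x) (hus_growth : LinGrowth p a usub)
    (hsuper : IsViscSupersol p lam d r a mu ubar (Ioi b₀))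
    (hsub : IsViscSubsol p lam d r a mu usub (Ioi b₀))
    (hinit : ∀ x ∈ Icc (-(p / a)) b₀, usub x ≤ ubar x)
    (hg : IsPenaltyWeight (drift p r a) d (-(p / a)) g) {γ ε η : ℝ} (hγ : 0 < γ) (hε : 0 < ε)
    (hη : 0 ≤ η) (hmod : ∀ z ∈ Icc (-(p / a)) b₀, ∀ w ∈ Icc z (z + 2 * γ), ubar z - ubar w ≤ η)
    {x : ℝ} (hx : -(p / a) ≤ x) :
    usub x ≤ ubar (x + γ) + ε * g x + η := by
  set f := fun x => usub x - ε * g x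
  have hf : ContinuousOn f (Ici (-(p / a))) :=
    hus_cont.sub (continuousOn_const.mul hg.contDiff.continuous.continuousOn)
  have htop : Tendsto f atTop atBot := hus_growth.tendsto_sub_mul_atBot hg.superlinear hε
  obtain ⟨M, hM⟩ := hf.bddAbove_image_Ici htop
  set V := f x - ubar (x + γ)
  -- `N γ^2 > M - V` forces the maximum point to satisfy `|X - Y + γ| < γ`
  set N := (|M - V| + 1) / γ ^ 2
  have hN : 0 < N := by positivity
  have hNγ : N * γ ^ 2 = |M - V| + 1 := by simp only [N]; field_simp
  obtain ⟨⟨X, Y⟩, ⟨hX, hY⟩, hmax⟩ := exists_isMaxOn_doubling (γ := γ) hf hub_cont hub_nonneg hN htop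
  have hV : V ≤ doubling f ubar N γ (X, Y) := by
    have h := isMaxOn_iff.mp hmax (x, x + γ) ⟨hx, mem_Ici.mpr (by linarith)⟩
    simp only [doubling] at h
    rwa [show x - (x + γ) + γ = 0 by ring, zero_pow two_ne_zero, mul_zero, sub_zero] at h
  suffices doubling f ubar N γ (X, Y) ≤ η by simp only [V, f] at hV; linarith
  have hfX : f X ≤ M := hM (mem_image_of_mem f hX)
  simp only [doubling] at hV ⊢
  have hρ : -γ < X - Y + γ ∧ X - Y + γ < γ := by
    refine abs_lt_of_sq_lt_sq' (lt_of_mul_lt_mul_left ?_ hN.le) hγ.le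
    nlinarith [hub_nonneg Y hY, le_abs_self (M - V)]
  have hgX := mul_nonneg hε.le (hg.nonneg X hX)
  have hpen := mul_nonneg hN.le (sq_nonneg (X - Y + γ))
  rcases le_or_gt X b₀ with hXb | hXb
  · have := hmod X ⟨hX, hXb⟩ Y ⟨by linarith, by linarith⟩
    have := hinit X ⟨hX, hXb⟩
    simp only [f]; linarith
  · have := sub_sub_super_le_of_isMaxOn_doubling hlam hd hr ha hub_cont hus_cont hub_nonneg
      hsuper hsub hg hε hXb (mem_Ioi.mpr (by linarith)) hX (by linarith) hmax
    simp only [f]; linarith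

end Comparison

theorem stmt1_general
    (p lam d r a : ℝ) (hlam : 0 < lam) (hd : 0 < d)
    (hr : 0 < r) (hra : r < a) (hrd : r < d)
    (mu : Measure ℝ) [IsProbabilityMeasure mu]
    (b₀ : ℝ)
    (ubar usub : ℝ → ℝ)
    (hub_nonneg : ∀ x ∈ Set.Ici (-(p / a)), 0 ≤ ubar x)
    (hub_cont : ContinuousOn ubar (Set.Ici (-(p / a))))
    (hus_cont : ContinuousOn usub (Set.Ici (-(p / a))))
    (hus_growth : LinGrowth p a usub)
    (hsuper : IsViscSupersol p lam d r a mu ubar (Set.Ioi b₀))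
    (hsub : IsViscSubsol p lam d r a mu usub (Set.Ioi b₀))
    (hinit : ∀ x ∈ Set.Icc (-(p / a)) b₀, usub x ≤ ubar x) :
    ∀ x : ℝ, -(p / a) ≤ x → usub x ≤ ubar x := by
  obtain ⟨g, hg⟩ := exists_isPenaltyWeight (c := drift p r a) (-(p / a)) (drift_le hra.le) hr hrd
  intro x hx
  refine le_of_forall_pos_le_add fun η hη => ?_
  obtain ⟨δ, hδ, hmod⟩ := hub_cont.exists_pos_forall_sub_le b₀ hη
  refine ContinuousOn.le_of_forall_le_add (v := fun y => ubar y + η)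
    (hub_cont.add continuousOn_const) hx (half_pos hδ) fun γ hγ => ?_
  refine le_of_forall_pos_le_add_mul (c := g x) fun ε hε => ?_
  have := sub_le_super_shift_add hlam.le hd hr.le (hr.trans hra).le hub_cont hus_cont hub_nonneg
    hus_growth hsuper hsub hinit hg hγ.1 hε hη.le
    (fun z hz w hw => hmod z hz w ⟨hw.1, by linarith [hw.2, hγ.2]⟩) hx
  linarith

theorem stmt1
    (p lam d r a : ℝ) (hp : 0 < p) (hlam : 0 < lam) (hd : 0 < d)
    (hr : 0 < r) (hra : r < a) (hrd : r < d)
    (mu : Measure ℝ) [IsProbabilityMeasure mu] (hmu : mu (Set.Iic 0) = 0)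
    (b₀ : ℝ) (hb₀ : -(p / a) < b₀)
    (ubar usub : ℝ → ℝ)
    (hub_nonneg : ∀ x ∈ Set.Ici (-(p / a)), 0 ≤ ubar x)
    (hus_nonneg : ∀ x ∈ Set.Ici (-(p / a)), 0 ≤ usub x)
    (hub_cont : ContinuousOn ubar (Set.Ici (-(p / a))))
    (hus_cont : ContinuousOn usub (Set.Ici (-(p / a))))
    (hub_lip : LocLipOn (Set.Ioi (-(p / a))) ubar)
    (hus_lip : LocLipOn (Set.Ioi (-(p / a))) usub)
    (hub_growth : LinGrowth p a ubar) (hus_growth : LinGrowth p a usub)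
    (hsuper : IsViscSupersol p lam d r a mu ubar (Set.Ioi b₀))
    (hsub : IsViscSubsol p lam d r a mu usub (Set.Ioi b₀))
    (hinit : ∀ x ∈ Set.Icc (-(p / a)) b₀, usub x ≤ ubar x) :
    ∀ x : ℝ, -(p / a) ≤ x → usub x ≤ ubar x :=
  stmt1_general p lam d r a hlam hd hr hra hrd mu b₀ ubar usub hub_nonneg hub_cont hus_cont
    hus_growth hsuper hsub hinit
end
end

section
/- Let V be a standard value-function candidate. Then for every x ∈ (−p/α,∞) with G_V(x) = 0 (i.e., every x ∈ A with x > −p/α), V is differentiable at x and V′(x) = 1. -/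
open MeasureTheory Set Filter

noncomputable section

lemma drift_pos' (p r a x : ℝ) (hp : 0 < p) (hr : 0 < r) (ha : 0 < a)
    (hx : -(p / a) < x) : 0 < drift p r a x := by
  unfold drift
  split_ifs with h
  · nlinarith
  · have hx2 : -p / a < x := by rw [neg_div]; exact hx
    have : -p < x * a := (div_lt_iff₀ ha).mp hx2
    nlinarith

set_option maxHeartbeats 1000000 in
theorem stmt6
    (p lam d r a : ℝ) (hp : 0 < p) (hlam : 0 < lam) (hd : 0 < d)
    (hr : 0 < r) (hra : r < a) (hrd : r < d)
    (mu : Measure ℝ) [IsProbabilityMeasure mu] (hmu : mu (Set.Iic 0) = 0)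
    (V : ℝ → ℝ) (hV : IsCandidate p lam d r a mu V)
    (x : ℝ) (hx : x ∈ Set.Ioi (-(p / a)))
    (hG : Gop p lam d r a mu V x = 0) :
    HasDerivAt V 1 x := by
  have hxlt : -(p / a) < x := hx
  have ha : 0 < a := lt_trans hr hra
  have hc : 0 < drift p r a x := drift_pos' p r a x hp hr ha hxlt
  have key : ∀ (h : ℕ → ℝ) (dd : ℝ), ((∀ n, 0 < h n) ∨ (∀ n, h n < 0)) →
      Tendsto h atTop (nhds 0) →
      Tendsto (fun n => (V (x + h n) - V x) / h n) atTop (nhds dd) → dd = 1 := by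
    intro h dd hsgn h0 hq
    obtain ⟨h1, h2⟩ := hV.derivLim x hx h dd hsgn h0 hq
    unfold Gop at hG
    refine le_antisymm ?_ h1
    by_contra hlt
    push_neg at hlt
    nlinarith
  rw [hasDerivAt_iff_tendsto_slope]
  apply tendsto_of_subseq_tendsto
  intro ns hns
  obtain ⟨K, eps, heps, hlip⟩ := hV.locLip x hx
  set ε : ℝ := min eps (x + p / a) with hεdef
  have hε0 : 0 < ε := lt_min heps (by linarith)
  have hsub : Metric.ball x ε ⊆ Set.Ioi (-(p / a)) ∩ Metric.ball x eps := by
    intro z hz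
    rw [Metric.mem_ball, Real.dist_eq] at hz
    have h1 := (abs_lt.mp hz).1
    have h2 := (abs_lt.mp hz).2
    have hεle : ε ≤ x + p / a := min_le_right _ _
    refine ⟨?_, ?_⟩
    · simp only [Set.mem_Ioi]; linarith
    · rw [Metric.mem_ball, Real.dist_eq]
      exact lt_of_lt_of_le hz (min_le_left _ _)
  have hxmem : x ∈ Set.Ioi (-(p / a)) ∩ Metric.ball x eps :=
    ⟨hx, Metric.mem_ball_self heps⟩
  have hbound : ∀ z, z ∈ Metric.ball x ε → z ≠ x → |slope V x z| ≤ K := by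
    intro z hz hzx
    have hzmem := hsub hz
    have hdist := hlip.dist_le_mul z hzmem x hxmem
    rw [Real.dist_eq, Real.dist_eq] at hdist
    have hpos : (0 : ℝ) < |z - x| := abs_pos.mpr (sub_ne_zero.mpr hzx)
    rw [slope_def_field, abs_div, div_le_iff₀ hpos]
    exact hdist
  have hns0 : Tendsto ns atTop (nhds x) := hns.mono_right nhdsWithin_le_nhds
  have hev : ∀ᶠ n in atTop, ns n ∈ Metric.ball x ε ∧ ns n ≠ x := by
    filter_upwards [hns0 (Metric.ball_mem_nhds x hε0), hns self_mem_nhdsWithin]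
      with n h1 h2
    exact ⟨h1, h2⟩
  obtain ⟨N, hN⟩ := eventually_atTop.mp hev
  set w : ℕ → ℝ := fun i => ns (i + N) with hwdef
  have hwmem : ∀ i, w i ∈ Metric.ball x ε ∧ w i ≠ x :=
    fun i => hN (i + N) (Nat.le_add_left N i)
  set q : ℕ → ℝ := fun i => slope V x (w i) with hqdef
  have hqmem : ∀ i, q i ∈ Set.Icc (-(K : ℝ)) K := by
    intro i
    exact abs_le.mp (hbound (w i) (hwmem i).1 (hwmem i).2)
  obtain ⟨dd, -, φ, hφ, hqφ⟩ :=
    tendsto_subseq_of_bounded (Metric.isBounded_Icc (-(K : ℝ)) K) hqmem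
  have hwtend : Tendsto (fun i => w (φ i)) atTop (nhds x) :=
    hns0.comp ((tendsto_add_atTop_nat N).comp hφ.tendsto_atTop)
  have hsgn : (∃ᶠ i in atTop, 0 < w (φ i) - x) ∨ (∃ᶠ i in atTop, w (φ i) - x < 0) := by
    rw [← frequently_or_distrib]
    refine Frequently.of_forall (fun i => ?_)
    rcases lt_or_gt_of_ne (sub_ne_zero.mpr (hwmem (φ i)).2) with h | h
    · exact Or.inr h
    · exact Or.inl h
  have main : ∀ ψ : ℕ → ℕ, StrictMono ψ →
      ((∀ i, 0 < w (φ (ψ i)) - x) ∨ (∀ i, w (φ (ψ i)) - x < 0)) →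
      ∃ ms : ℕ → ℕ, Tendsto (fun n => slope V x (ns (ms n))) atTop (nhds 1) := by
    intro ψ hψ hsg
    set H : ℕ → ℝ := fun i => w (φ (ψ i)) - x with hHdef
    have htend0 : Tendsto H atTop (nhds 0) := by
      have := (hwtend.comp hψ.tendsto_atTop).sub_const x
      simpa using this
    have hqcomp : Tendsto (fun i => q (φ (ψ i))) atTop (nhds dd) :=
      hqφ.comp hψ.tendsto_atTop
    have hquot : Tendsto (fun i => (V (x + H i) - V x) / H i) atTop (nhds dd) := by
      refine hqcomp.congr (fun i => ?_)
      simp [hqdef, hHdef, slope_def_field]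
    have hdd1 : dd = 1 := key H dd hsg htend0 hquot
    refine ⟨fun i => φ (ψ i) + N, ?_⟩
    have : Tendsto (fun i => slope V x (ns (φ (ψ i) + N))) atTop (nhds dd) := hqcomp
    rwa [hdd1] at this
  rcases hsgn with hfreq | hfreq
  · obtain ⟨ψ, hψ, hP⟩ := extraction_of_frequently_atTop hfreq
    exact main ψ hψ (Or.inl hP)
  · obtain ⟨ψ, hψ, hP⟩ := extraction_of_frequently_atTop hfreq
    exact main ψ hψ (Or.inr hP)
end
end

section
/- Assume α > λ+δ and let V be a standard value-function candidate. Then B ∩ (−p/α, 0) = ∅. -/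
open MeasureTheory Set Filter

noncomputable section

/-!
Suppose `x₀ ∈ (-p/α, 0)` has `V'(x₀) = 1` and `G_V(x₀) < 0`. Since `V(y) - y` is nondecreasing,
the points `y ≤ x₀` where `V` has slope exactly `1` on `[y, x₀]` form an interval `[z*, x₀]`.
If `z* = -p/α`, then `V(x₀) = x₀ + p/α` and `G_V(x₀) ≥ (α - λ - δ)(x₀ + p/α) > 0`. Otherwise,
because `α ≥ λ + δ`, moving left along the slope-one piece does not increase `G_V`, so `G_V < 0`
near `z*`. There the sub-solution property forbids slopes `m > 1`: at a maximum point `w` of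
`V(y) - m y` just left of `z*`, the test function `V(w) + m (y - w) + K (y - w)²` touches `V`
from above (the quadratic term absorbs the linear growth of `V`, the bound `V'(x₀) = 1 < m`
handles the points right of `x₀`), and `L = G_V(w) + c(w)(m - 1) < 0` contradicts it. Letting
`m ↓ 1` extends the slope-one piece to the left of `z*`, a contradiction.
-/

open Topology

section Iop

variable {p a : ℝ} {mu : Measure ℝ} {V : ℝ → ℝ}

lemma integrableOn_Iop_integrand [IsFiniteMeasure mu] (hV : ContinuousOn V (Ici (-(p / a))))
    (x : ℝ) : IntegrableOn (fun u => V (x - u)) (Ioc 0 (x + p / a)) mu := by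
  have hmaps : MapsTo (fun u => x - u) (Icc 0 (x + p / a)) (Ici (-(p / a))) :=
    fun u hu => by simp only [mem_Ici]; linarith [hu.2]
  exact ((hV.comp (continuous_sub_left x).continuousOn hmaps).integrableOn_compact
    isCompact_Icc).mono_set Ioc_subset_Icc_self

lemma Iop_nonneg (hV : ∀ y ∈ Ici (-(p / a)), 0 ≤ V y) (x : ℝ) : 0 ≤ Iop p a mu V x :=
  setIntegral_nonneg measurableSet_Ioc fun u hu => hV _ (by simp only [mem_Ici]; linarith [hu.2])

lemma Iop_monotoneOn [IsFiniteMeasure mu] (hcont : ContinuousOn V (Ici (-(p / a))))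
    (hmono : MonotoneOn V (Ici (-(p / a)))) (hnonneg : ∀ y ∈ Ici (-(p / a)), 0 ≤ V y) :
    MonotoneOn (Iop p a mu V) (Ici (-(p / a))) := by
  intro w hw z _ hwz
  have hwz' : w + p / a ≤ z + p / a := by linarith
  calc Iop p a mu V w
      ≤ ∫ u in Ioc 0 (w + p / a), V (z - u) ∂mu :=
        setIntegral_mono_on (integrableOn_Iop_integrand hcont w)
          ((integrableOn_Iop_integrand hcont z).mono_set (Ioc_subset_Ioc_right hwz'))
          measurableSet_Ioc fun u hu =>
            hmono (by simp only [mem_Ici]; linarith [hu.2])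
              (by simp only [mem_Ici]; linarith [hu.2]) (by linarith)
    _ ≤ Iop p a mu V z :=
        setIntegral_mono_set (integrableOn_Iop_integrand hcont z)
          ((ae_restrict_mem measurableSet_Ioc).mono fun u hu =>
            hnonneg _ (by simp only [mem_Ici]; linarith [hu.2]))
          (Ioc_subset_Ioc_right hwz').eventuallyLE

end Iop

lemma drift_of_neg {p r a x : ℝ} (hx : x < 0) : drift p r a x = p + a * x :=
  if_neg (not_le.mpr hx)

lemma drift_le_of_neg {p r a x : ℝ} (ha : 0 ≤ a) (hx : x < 0) : drift p r a x ≤ p := by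
  rw [drift_of_neg hx]
  nlinarith

lemma Gop_of_neg {p lam d r a : ℝ} {mu : Measure ℝ} {V : ℝ → ℝ} {x : ℝ} (hx : x < 0) :
    Gop p lam d r a mu V x = p + a * x - (lam + d) * V x + lam * Iop p a mu V x := by
  rw [Gop, drift_of_neg hx]

lemma exists_quadratic_majorant {S : Set ℝ} {f : ℝ → ℝ} {w m ρ A B : ℝ} (hρ : 0 < ρ)
    (hB : 0 ≤ B) (hbound : ∀ y ∈ S, f y ≤ A + B * |y|)
    (hnear : ∀ y ∈ S, |y - w| < ρ → f y ≤ f w + m * (y - w)) :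
    ∃ K, ∀ y ∈ S, f y ≤ f w + m * (y - w) + K * (y - w) ^ 2 := by
  set C₀ := abs (A - f w + B * |w|)
  set C₁ := B + |m|
  have hC₁ : 0 ≤ C₁ := by positivity
  refine ⟨C₀ / ρ ^ 2 + C₁ / ρ, fun y hy => ?_⟩
  have hK : 0 ≤ C₀ / ρ ^ 2 + C₁ / ρ := by positivity
  rcases lt_or_ge |y - w| ρ with hyw | hyw
  · linarith [hnear y hy hyw, mul_nonneg hK (sq_nonneg (y - w))]
  set t := |y - w|
  have ht2 : (y - w) ^ 2 = t ^ 2 := (sq_abs _).symm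
  have hlin : f y - f w - m * (y - w) ≤ C₀ + C₁ * t := by
    have h1 : |y| ≤ t + |w| := by
      simpa using abs_add_le (y - w) w
    have h2 : -(m * (y - w)) ≤ |m| * t := by
      simpa only [t, ← abs_mul] using neg_le_abs (m * (y - w))
    have h3 : A - f w + B * |w| ≤ C₀ := le_abs_self _
    nlinarith [hbound y hy]
  have hquad : C₀ + C₁ * t ≤ (C₀ / ρ ^ 2 + C₁ / ρ) * t ^ 2 := by
    have e1 : C₀ ≤ C₀ / ρ ^ 2 * t ^ 2 := by
      rw [div_mul_eq_mul_div, le_div_iff₀ (by positivity)]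
      exact mul_le_mul_of_nonneg_left (pow_le_pow_left₀ hρ.le hyw 2) (abs_nonneg _)
    have e2 : C₁ * t ≤ C₁ / ρ * t ^ 2 := by
      rw [div_mul_eq_mul_div, le_div_iff₀ hρ]
      nlinarith [mul_le_mul_of_nonneg_left hyw (mul_nonneg hC₁ (abs_nonneg (y - w)))]
    linarith
  rw [ht2]
  linarith

lemma eventually_le_add_mul_of_hasDerivAt {f : ℝ → ℝ} {f' m x : ℝ} (hf : HasDerivAt f f' x)
    (hm : f' < m) : ∀ᶠ y in 𝓝[>] x, f y ≤ f x + m * (y - x) := by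
  filter_upwards [hf.hasDerivWithinAt.limsup_slope_le' (lt_irrefl x) hm, self_mem_nhdsWithin]
    with y hslope hy
  rw [slope_def_field, div_lt_iff₀ (sub_pos.mpr hy)] at hslope
  linarith

lemma exists_sub_mul_le_of_slope_one {V : ℝ → ℝ} {zs x₀ m : ℝ} (hder : HasDerivAt V 1 x₀)
    (hm : 1 < m) (hzs : zs ≤ x₀) (haff : ∀ y ∈ Icc zs x₀, V y - V zs = y - zs) :
    ∃ b, x₀ < b ∧ ∀ y ∈ Ico zs b, V y - m * y ≤ V zs - m * zs := by
  obtain ⟨b, hb, hder_b⟩ :=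
    mem_nhdsGT_iff_exists_Ioo_subset.1 (eventually_le_add_mul_of_hasDerivAt hder hm)
  have hVx₀ := haff x₀ ⟨hzs, le_rfl⟩
  refine ⟨b, hb, fun y ⟨hzy, hyb⟩ => ?_⟩
  rcases le_or_gt y x₀ with hyx | hyx
  · nlinarith [haff y ⟨hzy, hyx⟩]
  · have : V y ≤ V x₀ + m * (y - x₀) := hder_b ⟨hyx, hyb⟩
    nlinarith

lemma IsViscSubsol.le_Gop_add_drift_mul {p lam d r a : ℝ} {mu : Measure ℝ} {V : ℝ → ℝ}
    {J : Set ℝ} {w m K : ℝ} (hsub : IsViscSubsol p lam d r a mu V J) (hw : w ∈ J) (hm : 1 < m)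
    (hdom : ∀ y ∈ Ici (-(p / a)), V y ≤ V w + m * (y - w) + K * (y - w) ^ 2) :
    0 ≤ Gop p lam d r a mu V w + drift p r a w * (m - 1) := by
  set φ : ℝ → ℝ := fun y => V w + m * (y - w) + K * (y - w) ^ 2
  have hφ' : HasDerivAt φ m w := by
    have h := (hasDerivAt_id' w).sub_const w
    have h2 : HasDerivAt φ (m * 1 + K * ((2 : ℕ) * (w - w) ^ (2 - 1) * 1)) w :=
      ((h.const_mul m).const_add (V w)).add ((h.pow 2).const_mul K)
    simpa using h2
  have hmax := hsub w hw φ (by fun_prop) (by simp [φ]) fun y hy => by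
    simp only [φ]; linarith [hdom y hy]
  rw [hφ'.deriv] at hmax
  have hL := (le_max_iff.1 hmax).resolve_left (by linarith)
  rw [Lphi, hφ'.deriv] at hL
  rw [Gop]
  linarith

section Candidate

variable {p lam d r a : ℝ} {mu : Measure ℝ} {V : ℝ → ℝ}

lemma IsCandidate.exists_le_add_mul_abs (hV : IsCandidate p lam d r a mu V) :
    ∃ A B, 0 ≤ B ∧ ∀ y ∈ Ici (-(p / a)), V y ≤ A + B * |y| := by
  refine ⟨|V 0| + |p / (d - r) + p / a|, |d / (d - r)|, abs_nonneg _, fun y hy => ?_⟩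
  have hB : 0 ≤ |d / (d - r)| * |y| := by positivity
  rcases le_total y 0 with hy0 | hy0
  · have : V y ≤ V 0 := hV.mono hy (mem_Ici.2 (hy.trans hy0)) hy0
    linarith [le_abs_self (V 0), abs_nonneg (p / (d - r) + p / a)]
  · have hgrowth : V y ≤ d / (d - r) * y + (p / (d - r) + p / a) := by
      have := hV.growth y hy0
      rwa [add_div, mul_div_right_comm, add_assoc] at this
    have : d / (d - r) * y ≤ |d / (d - r)| * |y| := by
      rw [← abs_mul]; exact le_abs_self _
    linarith [abs_nonneg (V 0), le_abs_self (p / (d - r) + p / a)]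

lemma Gop_pos_of_le_add_div (hnonneg : ∀ y ∈ Ici (-(p / a)), 0 ≤ V y) (hlam : 0 ≤ lam)
    (hd : 0 ≤ d) (hald : lam + d < a) {x : ℝ} (hx : x ∈ Ioo (-(p / a)) 0)
    (hVx : V x ≤ x + p / a) : 0 < Gop p lam d r a mu V x := by
  have ha : a ≠ 0 := by linarith
  have hpa : p + a * x = a * (x + p / a) := by field_simp; ring
  have hx' : 0 < x + p / a := by linarith [hx.1]
  rw [Gop_of_neg hx.2, hpa]
  nlinarith [mul_nonneg hlam (Iop_nonneg (mu := mu) hnonneg x),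
    mul_le_mul_of_nonneg_left hVx (add_nonneg hlam hd)]

lemma IsCandidate.sub_le_mul_of_Gop_add_neg (hV : IsCandidate p lam d r a mu V) (ha : 0 ≤ a)
    {x₀ zs z m : ℝ} (hder : HasDerivAt V 1 x₀) (hx₀ : x₀ < 0) (hzs : zs ≤ x₀)
    (haff : ∀ y ∈ Icc zs x₀, V y - V zs = y - zs) (hz : -(p / a) < z) (hzzs : z < zs)
    (hm : 1 < m) (hG : ∀ w ∈ Icc z zs, Gop p lam d r a mu V w + p * (m - 1) < 0) :
    V zs - V z ≤ m * (zs - z) := by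
  by_contra! h
  have hθ : ContinuousOn (fun y => V y - m * y) (Icc z zs) :=
    (hV.cont.mono fun y hy => mem_Ici.2 (hz.le.trans hy.1)).sub (continuousOn_const.mul
      continuousOn_id)
  obtain ⟨w, hw, hmax⟩ := isCompact_Icc.exists_isMaxOn (nonempty_Icc.2 hzzs.le) hθ
  have hmax' : ∀ y ∈ Icc z zs, V y - m * y ≤ V w - m * w := hmax
  have hzw : z < w := hw.1.lt_of_ne <| by
    rintro rfl
    linarith [hmax' zs ⟨hzzs.le, le_rfl⟩]
  obtain ⟨b, hxb, hright⟩ := exists_sub_mul_le_of_slope_one hder hm hzs haff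
  have hnear : ∀ y ∈ Ici (-(p / a)), |y - w| < min (w - z) (b - w) →
      V y ≤ V w + m * (y - w) := by
    intro y _ hy
    rw [lt_min_iff, abs_lt, abs_lt] at hy
    have : V y - m * y ≤ V w - m * w := by
      rcases le_total y zs with hyzs | hzsy
      · exact hmax' y ⟨by linarith, hyzs⟩
      · exact (hright y ⟨hzsy, by linarith⟩).trans (hmax' zs ⟨hzzs.le, le_rfl⟩)
    linarith
  obtain ⟨A, B, hB, hbound⟩ := hV.exists_le_add_mul_abs
  obtain ⟨K, hK⟩ := exists_quadratic_majorant (lt_min (by linarith) (by linarith [hw.2])) hB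
    hbound hnear
  have hvisc := hV.visc.1.le_Gop_add_drift_mul (mem_Ioi.2 (hz.trans hzw)) hm hK
  have hdrift : drift p r a w * (m - 1) ≤ p * (m - 1) :=
    mul_le_mul_of_nonneg_right (drift_le_of_neg ha (by linarith [hw.2])) (by linarith)
  linarith [hG w hw]

variable [IsFiniteMeasure mu]

lemma IsCandidate.Gop_le_of_sub_eq (hV : IsCandidate p lam d r a mu V) (hlam : 0 ≤ lam)
    (hald : lam + d ≤ a) {zs x : ℝ} (hzs : -(p / a) ≤ zs) (hzx : zs ≤ x) (hx : x < 0)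
    (hVzx : V x - V zs = x - zs) : Gop p lam d r a mu V zs ≤ Gop p lam d r a mu V x := by
  have hI := Iop_monotoneOn (mu := mu) hV.cont hV.mono hV.nonneg hzs (mem_Ici.2 (hzs.trans hzx))
    hzx
  have hVlin : (lam + d) * (V x - V zs) = (lam + d) * (x - zs) := by rw [hVzx]
  rw [Gop_of_neg (hzx.trans_lt hx), Gop_of_neg hx]
  linarith [mul_le_mul_of_nonneg_left hI hlam, mul_nonneg (sub_nonneg.2 hald) (sub_nonneg.2 hzx)]

lemma IsCandidate.eventually_Gop_lt (hV : IsCandidate p lam d r a mu V) (hlam : 0 ≤ lam)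
    (ha : 0 ≤ a) {zs c : ℝ} (hzs : zs ∈ Ioo (-(p / a)) 0) (hc : Gop p lam d r a mu V zs < c) :
    ∀ᶠ w in 𝓝[≤] zs, Gop p lam d r a mu V w < c := by
  have hcont : ContinuousAt V zs := hV.cont.continuousAt (Ici_mem_nhds hzs.1)
  have hclose : ∀ᶠ w in 𝓝 zs, (lam + d) * (V zs - V w) < c - Gop p lam d r a mu V zs :=
    ((tendsto_const_nhds.sub hcont.tendsto).const_mul (lam + d)).eventually_lt_const
      (by simpa using hc)
  filter_upwards [self_mem_nhdsWithin, nhdsWithin_le_nhds hclose,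
    nhdsWithin_le_nhds (Ici_mem_nhds hzs.1)] with w hwzs hw hwp
  have hI := Iop_monotoneOn (mu := mu) hV.cont hV.mono hV.nonneg hwp
    (mem_Ici.2 hzs.1.le) hwzs
  rw [Gop_of_neg (lt_of_le_of_lt hwzs hzs.2)]
  rw [Gop_of_neg hzs.2] at hw
  nlinarith [mul_le_mul_of_nonneg_left hI hlam, mul_le_mul_of_nonneg_left (mem_Iic.1 hwzs) ha]

lemma IsCandidate.exists_lt_sub_le_sub (hV : IsCandidate p lam d r a mu V) (hlam : 0 ≤ lam)
    (ha : 0 ≤ a) {x₀ zs : ℝ} (hder : HasDerivAt V 1 x₀) (hx₀ : x₀ < 0) (hzs : -(p / a) < zs)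
    (hzsx : zs ≤ x₀) (haff : ∀ y ∈ Icc zs x₀, V y - V zs = y - zs)
    (hG : Gop p lam d r a mu V zs < 0) :
    ∃ z ∈ Ico (-(p / a)) zs, V zs - V z ≤ zs - z := by
  obtain ⟨z, hzzs, hwindow⟩ := mem_nhdsLE_iff_exists_Icc_subset.1 <|
    (hV.eventually_Gop_lt hlam ha ⟨hzs, hzsx.trans_lt hx₀⟩
      (c := Gop p lam d r a mu V zs / 2) (by linarith)).and
      (nhdsWithin_le_nhds (Ioi_mem_nhds hzs))
  have hz : -(p / a) < z := (hwindow (left_mem_Icc.2 hzzs.le)).2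
  have hp : ∀ᶠ m in 𝓝[>] (1 : ℝ), p * (m - 1) < -(Gop p lam d r a mu V zs / 2) :=
    ((continuous_const.mul (continuous_id.sub continuous_const)).tendsto' 1 0 (by simp)
      |>.mono_left nhdsWithin_le_nhds).eventually_lt_const (by linarith)
  have hslope : ∀ᶠ m in 𝓝[>] (1 : ℝ), V zs - V z ≤ m * (zs - z) := by
    filter_upwards [hp, self_mem_nhdsWithin] with m hpm hm
    exact hV.sub_le_mul_of_Gop_add_neg ha hder hx₀ hzsx haff hz hzzs hm fun w hw => by
      linarith [(hwindow hw).1]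
  refine ⟨z, ⟨hz.le, hzzs⟩, ge_of_tendsto ?_ hslope⟩
  exact (continuous_id.mul continuous_const).tendsto' 1 (zs - z) (one_mul _)
    |>.mono_left nhdsWithin_le_nhds

end Candidate

theorem stmt12_general
    (p lam d r a : ℝ) (hlam : 0 < lam) (hd : 0 < d)
    (mu : Measure ℝ) [IsProbabilityMeasure mu]
    (hald : lam + d < a)
    (V : ℝ → ℝ) (hV : IsCandidate p lam d r a mu V) :
    setB p lam d r a mu V ∩ Set.Ioo (-(p / a)) 0 = ∅ := by
  have ha : 0 ≤ a := by linarith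
  refine eq_empty_iff_forall_notMem.2 fun x₀ ⟨⟨_, hdiff, hderiv, hG⟩, hx₀⟩ => ?_
  have hder : HasDerivAt V 1 x₀ := hderiv ▸ hdiff.hasDerivAt
  set Z := {y ∈ Icc (-(p / a)) x₀ | V x₀ - x₀ ≤ V y - y}
  have hZ : IsCompact Z := isCompact_Icc.of_isClosed_subset
    (((hV.cont.mono Icc_subset_Ici_self).sub continuousOn_id).preimage_isClosed_of_isClosed
      isClosed_Icc isClosed_Ici) (sep_subset _ _)
  obtain ⟨⟨hzs, hzsx⟩, hVzs⟩ := hZ.sInf_mem ⟨x₀, ⟨hx₀.1.le, le_rfl⟩, le_rfl⟩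
  set zs := sInf Z
  have haff : ∀ y ∈ Icc zs x₀, V y - V zs = y - zs := fun y hy => by
    linarith [hV.slope zs y hzs hy.1, hV.slope y x₀ (hzs.trans hy.1) hy.2]
  rcases hzs.eq_or_lt with hbdry | hzs
  · refine (Gop_pos_of_le_add_div hV.nonneg hlam.le hd.le hald hx₀ ?_).not_gt hG
    linarith [haff x₀ ⟨hzsx, le_rfl⟩, hbdry ▸ hV.boundary]
  · obtain ⟨z, ⟨hz, hzzs⟩, hVz⟩ := hV.exists_lt_sub_le_sub hlam.le ha hder hx₀.2 hzs
      hzsx haff ((hV.Gop_le_of_sub_eq hlam.le hald.le hzs.le hzsx hx₀.2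
        (haff x₀ ⟨hzsx, le_rfl⟩)).trans_lt hG)
    refine hzzs.not_ge (csInf_le hZ.bddBelow ⟨⟨hz, hzzs.le.trans hzsx⟩, ?_⟩)
    linarith [haff x₀ ⟨hzsx, le_rfl⟩]

theorem stmt12
    (p lam d r a : ℝ) (hp : 0 < p) (hlam : 0 < lam) (hd : 0 < d)
    (hr : 0 < r) (hra : r < a) (hrd : r < d)
    (mu : Measure ℝ) [IsProbabilityMeasure mu] (hmu : mu (Set.Iic 0) = 0)
    (hald : lam + d < a)
    (V : ℝ → ℝ) (hV : IsCandidate p lam d r a mu V) :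
    setB p lam d r a mu V ∩ Set.Ioo (-(p / a)) 0 = ∅ :=
  stmt12_general p lam d r a hlam hd mu hald V hV
end
end
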